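/- For every integer ℓ ≥ 1 there exist constants c₁, c₂ > 0 and M₀ > 1, depending only on ℓ, such that for all real M ≥ M₀: c₁·(log M)^{ℓ−1}/M ≤ ∑ 1/(a₁²·a₂²⋯a_{ℓ+1}²) ≤ c₂·(log M)^{ℓ−1}/M, where the sum ranges over all (ℓ+1)-tuples (a₁, …, a_{ℓ+1}) of positive integers satisfying a₁·a₂⋯a_ℓ < M and a₂·a₃⋯a_{ℓ+1} ≥ M. -/

import Mathlib

open MeasureTheory Filter Set

/-- The series ∑ 1/(a₁²⋯a_{ℓ+1}²) over (ℓ+1)-tuples of positive integers with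
a₁⋯a_ℓ < M and a₂⋯a_{ℓ+1} ≥ M. -/
noncomputable def shiftedSum (ℓ : ℕ) (M : ℝ) : ℝ :=
  ∑' a : {a : Fin (ℓ + 1) → ℕ // (∀ i, 0 < a i) ∧
      ((∏ i : Fin ℓ, a i.castSucc : ℕ) : ℝ) < M ∧
      M ≤ ((∏ i : Fin ℓ, a i.succ : ℕ) : ℝ)},
    (1 : ℝ) / ∏ i, (a.1 i : ℝ) ^ 2

/-!
Write `ℓ = k + 1`, a tuple as `(b, u₁, …, u_k, c)` and `Q = u₁ ⋯ u_k`. The constraints read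
`b Q < M ≤ Q c`, so for fixed `(b, u)` the sum over `c` is the tail `∑_{c ≥ M / Q} c⁻² ≍ Q / M`,
and the summand collapses to `b⁻² ∏ uᵢ⁻¹ / M`. Summing over `b ≥ 1` and over `uᵢ ≤ M` bounds
the series by a multiple of `(1 + log M)ᵏ / M`. Conversely, `b = 1` together with the box
`1 ≤ uᵢ ≤ N`, where `N = ⌊M^{1/(k+1)}⌋` keeps `Q < M`, contributes `≍ H_Nᵏ / M`, and
`H_N ≥ log (N + 1) ≥ log M / (k + 1)`.
The sums are computed in `ℝ≥0∞`, where rearranging them needs no summability.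
-/

open Finset

open scoped ENNReal

noncomputable def invSqTail (x : ℝ) : ℝ :=
  ∑' n : ℕ, if x ≤ n then ((n : ℝ) ^ 2)⁻¹ else 0

lemma summable_invSqTail (x : ℝ) :
    Summable fun n : ℕ => if x ≤ n then ((n : ℝ) ^ 2)⁻¹ else 0 :=
  (Real.summable_nat_pow_inv.mpr one_lt_two).of_nonneg_of_le (fun n => by positivity)
    fun n => by split_ifs; exacts [le_rfl, by positivity]

lemma invSqTail_le {x : ℝ} (hx : 0 < x) : invSqTail x ≤ 2 / x := by
  have hm : 1 ≤ ⌈x⌉₊ := Nat.one_le_ceil_iff.mpr hx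
  refine Real.tsum_le_of_sum_range_le (fun n => by positivity) fun N => ?_
  calc ∑ n ∈ range N, (if x ≤ n then ((n : ℝ) ^ 2)⁻¹ else 0)
      = ∑ n ∈ (range N).filter fun n : ℕ => x ≤ n, ((n : ℝ) ^ 2)⁻¹ := (sum_filter _ _).symm
    _ ≤ ∑ n ∈ Ioo (⌈x⌉₊ - 1) N, ((n : ℝ) ^ 2)⁻¹ := by
        refine sum_le_sum_of_subset_of_nonneg (fun n hn => ?_) fun _ _ _ => by positivity
        simp only [Finset.mem_filter, Finset.mem_range] at hn
        have := Nat.ceil_le.mpr hn.2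
        simp only [Finset.mem_Ioo]
        omega
    _ ≤ 2 / ((⌈x⌉₊ - 1 : ℕ) + 1) := sum_Ioo_inv_sq_le _ _
    _ ≤ 2 / x := by
        rw [Nat.cast_sub hm, Nat.cast_one, sub_add_cancel]
        exact div_le_div_of_nonneg_left zero_le_two hx (Nat.le_ceil x)

lemma le_invSqTail {x : ℝ} (hx : 1 ≤ x) : 1 / (8 * x) ≤ invSqTail x := by
  set m := ⌈x⌉₊
  have hm : (0 : ℝ) < m := Nat.cast_pos.mpr (Nat.ceil_pos.mpr (by linarith))
  have hmx : (m : ℝ) ≤ 2 * x := by linarith [Nat.ceil_lt_add_one (by linarith : 0 ≤ x)]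
  -- `m` terms, each at least `1 / (2m)²`
  have hblock : 1 / (4 * m) ≤ ∑ n ∈ Ico m (2 * m), ((n : ℝ) ^ 2)⁻¹ := by
    have := card_nsmul_le_sum (Ico m (2 * m)) (fun n : ℕ => ((n : ℝ) ^ 2)⁻¹)
      (((2 * m : ℕ) : ℝ) ^ 2)⁻¹ fun n hn => by
        have hn := Finset.mem_Ico.mp hn
        have : (0 : ℝ) < n := by exact_mod_cast hm.trans_le (Nat.cast_le.mpr hn.1)
        gcongr
        exact_mod_cast hn.2.le
    rw [Nat.card_Ico, nsmul_eq_mul] at this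
    refine le_trans (le_of_eq ?_) this
    rw [show 2 * m - m = m by omega]
    push_cast
    field_simp
    ring
  calc 1 / (8 * x) ≤ 1 / (4 * m) := one_div_le_one_div_of_le (by positivity) (by linarith)
    _ ≤ ∑ n ∈ Ico m (2 * m), ((n : ℝ) ^ 2)⁻¹ := hblock
    _ = ∑ n ∈ Ico m (2 * m), if x ≤ n then ((n : ℝ) ^ 2)⁻¹ else 0 :=
        sum_congr rfl fun n hn => (if_pos ((Nat.le_ceil x).trans
          (Nat.cast_le.mpr (Finset.mem_Ico.mp hn).1))).symm
    _ ≤ invSqTail x := (summable_invSqTail x).sum_le_tsum _ fun _ _ => by positivity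

lemma tsum_ite_inv_sq_eq_ofReal_invSqTail {x : ℝ} (hx : 0 < x) :
    ∑' n : ℕ, (if x ≤ n then ((n : ℝ≥0∞) ^ 2)⁻¹ else 0) = ENNReal.ofReal (invSqTail x) := by
  rw [invSqTail, ENNReal.ofReal_tsum_of_nonneg (fun n => by positivity) (summable_invSqTail x)]
  refine tsum_congr fun n => ?_
  split_ifs with h
  · have : (0 : ℝ) < n := hx.trans_le h
    rw [ENNReal.ofReal_inv_of_pos (by positivity), ENNReal.ofReal_pow this.le,
      ENNReal.ofReal_natCast]
  · simp

lemma sum_Icc_inv_eq_ofReal_harmonic (N : ℕ) :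
    ∑ n ∈ Icc 1 N, (n : ℝ≥0∞)⁻¹ = ENNReal.ofReal (harmonic N) := by
  rw [harmonic_eq_sum_Icc, Rat.cast_sum, ENNReal.ofReal_sum_of_nonneg fun n _ => by positivity]
  refine sum_congr rfl fun n hn => ?_
  have : (0 : ℝ) < n := by exact_mod_cast (Finset.mem_Icc.mp hn).1
  rw [Rat.cast_inv, Rat.cast_natCast, ENNReal.ofReal_inv_of_pos this, ENNReal.ofReal_natCast]

lemma ENNReal.inv_sq_mul_self {a : ℝ≥0∞} (h₀ : a ≠ 0) (htop : a ≠ ⊤) : (a ^ 2)⁻¹ * a = a⁻¹ := by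
  rw [ENNReal.inv_pow, sq, mul_assoc, ENNReal.inv_mul_cancel h₀ htop, mul_one]

lemma prod_inv_sq_mul_ofReal_prod {k : ℕ} {u : Fin k → ℕ} (hu : ∀ i, 0 < u i) {t : ℝ}
    (ht : 0 ≤ t) :
    (∏ i, ((u i : ℝ≥0∞) ^ 2)⁻¹) * ENNReal.ofReal (t * ∏ i, (u i : ℝ))
      = ENNReal.ofReal t * ∏ i, (u i : ℝ≥0∞)⁻¹ := by
  rw [ENNReal.ofReal_mul ht, ENNReal.ofReal_prod_of_nonneg fun i _ => by positivity,
    mul_left_comm, ← prod_mul_distrib]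
  congr 2 with i
  rw [ENNReal.ofReal_natCast,
    ENNReal.inv_sq_mul_self (Nat.cast_ne_zero.mpr (hu i).ne') (ENNReal.natCast_ne_top _)]

lemma ENNReal.tsum_fin_cons_snoc {α : Type*} {k : ℕ} (f : (Fin (k + 2) → α) → ℝ≥0∞) :
    ∑' a, f a = ∑' (b : α) (u : Fin k → α) (c : α), f (Fin.cons b (Fin.snoc u c)) := by
  rw [← (Fin.consEquiv fun _ => α).tsum_eq, ENNReal.tsum_prod']
  refine tsum_congr fun b => ?_
  rw [← (Fin.snocEquiv fun _ => α).tsum_eq, ENNReal.tsum_prod', ENNReal.tsum_comm]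
  rfl

namespace Fin

variable {α β : Type*} [CommMonoid β] {k : ℕ} (f : α → β) (b c : α) (u : Fin k → α)

lemma prod_cons_snoc_castSucc :
    ∏ i : Fin (k + 1), f ((cons b (snoc u c) : Fin (k + 2) → α) i.castSucc)
      = f b * ∏ i, f (u i) := by
  simp [prod_univ_succ]

lemma prod_cons_snoc_succ :
    ∏ i : Fin (k + 1), f ((cons b (snoc u c) : Fin (k + 2) → α) i.succ)
      = (∏ i, f (u i)) * f c := by
  simp [prod_univ_castSucc]

lemma prod_cons_snoc :
    ∏ i, f ((cons b (snoc u c) : Fin (k + 2) → α) i) = f b * (∏ i, f (u i)) * f c := by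
  rw [prod_univ_succ, cons_zero, prod_cons_snoc_succ, mul_assoc]

lemma forall_cons_snoc (p : α → Prop) :
    (∀ i, p ((cons b (snoc u c) : Fin (k + 2) → α) i)) ↔ p b ∧ (∀ i, p (u i)) ∧ p c := by
  rw [forall_fin_succ, forall_fin_succ']
  simp only [cons_zero, cons_succ, snoc_castSucc, snoc_last]

end Fin

noncomputable def shiftedTerm (k : ℕ) (M : ℝ) (b : ℕ) (u : Fin k → ℕ) (c : ℕ) : ℝ≥0∞ :=
  if 0 < b ∧ (∀ i, 0 < u i) ∧ 0 < c ∧ b * ∏ i, (u i : ℝ) < M ∧ M ≤ (∏ i, (u i : ℝ)) * c then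
    ((b : ℝ≥0∞) ^ 2)⁻¹ * (∏ i, ((u i : ℝ≥0∞) ^ 2)⁻¹) * ((c : ℝ≥0∞) ^ 2)⁻¹
  else 0

lemma shiftedSum_eq_toReal_tsum_shiftedTerm (k : ℕ) (M : ℝ) :
    shiftedSum (k + 1) M = (∑' (b) (u) (c), shiftedTerm k M b u c).toReal := by
  set s := {a : Fin (k + 2) → ℕ | (∀ i, 0 < a i) ∧
      ((∏ i : Fin (k + 1), a i.castSucc : ℕ) : ℝ) < M ∧
      M ≤ ((∏ i : Fin (k + 1), a i.succ : ℕ) : ℝ)}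
  set g : (Fin (k + 2) → ℕ) → ℝ≥0∞ := fun a => ∏ i, ((a i : ℝ≥0∞) ^ 2)⁻¹
  have hg : ∀ a : s, g a ≠ ⊤ := fun a => ENNReal.prod_ne_top fun i _ =>
    ENNReal.inv_ne_top.mpr (pow_ne_zero _ (Nat.cast_ne_zero.mpr (a.2.1 i).ne'))
  calc shiftedSum (k + 1) M = ∑' a : s, (g a).toReal := by
        refine tsum_congr fun a => ?_
        simp only [g, ENNReal.toReal_prod, ENNReal.toReal_inv, ENNReal.toReal_pow,
          ENNReal.toReal_natCast, one_div, prod_inv_distrib]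
    _ = (∑' a, s.indicator g a).toReal := by rw [← ENNReal.tsum_toReal_eq hg, _root_.tsum_subtype]
    _ = _ := by
        rw [ENNReal.tsum_fin_cons_snoc]
        refine congrArg _ (tsum_congr fun b => tsum_congr fun u => tsum_congr fun c => ?_)
        simp only [s, g, shiftedTerm, Set.indicator_apply, Set.mem_ofPred_eq,
          Fin.forall_cons_snoc, Fin.prod_cons_snoc_castSucc, Fin.prod_cons_snoc_succ,
          Fin.prod_cons_snoc (fun n : ℕ => ((n : ℝ≥0∞) ^ 2)⁻¹), Nat.cast_prod, and_assoc]

lemma tsum_shiftedTerm_eq {k : ℕ} {M : ℝ} (hM : 0 < M) {b : ℕ} (hb : 0 < b) {u : Fin k → ℕ}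
    (hu : ∀ i, 0 < u i) :
    ∑' c, shiftedTerm k M b u c = if b * ∏ i, (u i : ℝ) < M then
      ((b : ℝ≥0∞) ^ 2)⁻¹ * (∏ i, ((u i : ℝ≥0∞) ^ 2)⁻¹) *
        ENNReal.ofReal (invSqTail (M / ∏ i, (u i : ℝ))) else 0 := by
  have hQ : 0 < ∏ i, (u i : ℝ) := prod_pos fun i _ => Nat.cast_pos.mpr (hu i)
  split_ifs with hbQ
  · rw [← tsum_ite_inv_sq_eq_ofReal_invSqTail (div_pos hM hQ), ← ENNReal.tsum_mul_left]
    refine tsum_congr fun c => ?_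
    have hc : 0 < c ∧ M ≤ (∏ i, (u i : ℝ)) * c ↔ M / ∏ i, (u i : ℝ) ≤ c := by
      rw [div_le_iff₀' hQ]
      exact ⟨And.right, fun h => ⟨Nat.cast_pos.mp (pos_of_mul_pos_right (hM.trans_le h) hQ.le), h⟩⟩
    simp only [shiftedTerm, hb, hu, hbQ, implies_true, true_and, hc]
    split_ifs <;> simp
  · simp [shiftedTerm, hbQ]

lemma tsum_shiftedTerm_le_mul {k : ℕ} {M : ℝ} (hM : 0 < M) (b : ℕ) (u : Fin k → ℕ) :
    ∑' c, shiftedTerm k M b u c ≤ (if 0 < b then ((b : ℝ≥0∞) ^ 2)⁻¹ else 0) *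
      if (∀ i, 0 < u i) ∧ ∏ i, (u i : ℝ) < M then
        (∏ i, ((u i : ℝ≥0∞) ^ 2)⁻¹) * ENNReal.ofReal (2 / M * ∏ i, (u i : ℝ)) else 0 := by
  by_cases hb : 0 < b
  swap
  · simp [shiftedTerm, hb]
  by_cases hu : ∀ i, 0 < u i
  swap
  · simp [shiftedTerm, hu]
  have hQ : 0 < ∏ i, (u i : ℝ) := prod_pos fun i _ => Nat.cast_pos.mpr (hu i)
  rw [tsum_shiftedTerm_eq hM hb hu]
  split_ifs with hbQ hQM
  · rw [mul_assoc]
    gcongr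
    refine (invSqTail_le (div_pos hM hQ)).trans_eq ?_
    field_simp
  · exact absurd ⟨hu, (le_mul_of_one_le_left hQ.le (Nat.one_le_cast.mpr hb)).trans_lt hbQ⟩ hQM
  · exact zero_le
  · exact zero_le

lemma tsum_prod_inv_sq_mul_ofReal_le {k : ℕ} {M : ℝ} (hM : 1 ≤ M) {t : ℝ} (ht : 0 ≤ t) :
    ∑' u : Fin k → ℕ, (if (∀ i, 0 < u i) ∧ ∏ i, (u i : ℝ) < M then
        (∏ i, ((u i : ℝ≥0∞) ^ 2)⁻¹) * ENNReal.ofReal (t * ∏ i, (u i : ℝ)) else 0)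
      ≤ ENNReal.ofReal t * ENNReal.ofReal (1 + Real.log M) ^ k := by
  set N := ⌊M⌋₊
  have hN : 0 < N := Nat.floor_pos.mpr hM
  have hbox : ∀ u : Fin k → ℕ, (∀ i, 0 < u i) ∧ ∏ i, (u i : ℝ) < M →
      u ∈ Fintype.piFinset fun _ => Icc 1 N := by
    refine fun u hu => Fintype.mem_piFinset.mpr fun i => Finset.mem_Icc.mpr ⟨hu.1 i, ?_⟩
    refine Nat.le_floor (le_trans ?_ hu.2.le)
    exact_mod_cast single_le_prod' (f := u) (fun j _ => hu.1 j) (Finset.mem_univ i)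
  rw [tsum_eq_sum fun u hu => if_neg fun h => hu (hbox u h)]
  calc _ ≤ ∑ u ∈ Fintype.piFinset fun _ => Icc 1 N, ENNReal.ofReal t * ∏ i, (u i : ℝ≥0∞)⁻¹ := by
        refine sum_le_sum fun u _ => ?_
        split_ifs with hu
        · exact (prod_inv_sq_mul_ofReal_prod hu.1 ht).le
        · exact zero_le
    _ = ENNReal.ofReal t * ENNReal.ofReal (harmonic N) ^ k := by
        rw [← mul_sum, ← sum_Icc_inv_eq_ofReal_harmonic, sum_pow']
    _ ≤ ENNReal.ofReal t * ENNReal.ofReal (1 + Real.log M) ^ k := by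
        gcongr
        refine (harmonic_le_one_add_log N).trans ?_
        gcongr
        exact Nat.floor_le (by linarith)

lemma tsum_shiftedTerm_le (k : ℕ) {M : ℝ} (hM : 1 ≤ M) :
    ∑' (b) (u) (c), shiftedTerm k M b u c
      ≤ ENNReal.ofReal (4 * (1 + Real.log M) ^ k / M) := by
  have hM₀ : 0 < M := by linarith
  have hb : ∑' b : ℕ, (if 0 < b then ((b : ℝ≥0∞) ^ 2)⁻¹ else 0) ≤ ENNReal.ofReal 2 := by
    have hpos : ∀ b : ℕ, 0 < b ↔ (1 : ℝ) ≤ b := fun b => Nat.one_le_cast.symm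
    simp_rw [hpos, tsum_ite_inv_sq_eq_ofReal_invSqTail one_pos]
    exact ENNReal.ofReal_le_ofReal ((invSqTail_le one_pos).trans_eq (div_one 2))
  calc _ ≤ ∑' (b : ℕ) (u : Fin k → ℕ), (if 0 < b then ((b : ℝ≥0∞) ^ 2)⁻¹ else 0) *
        if (∀ i, 0 < u i) ∧ ∏ i, (u i : ℝ) < M then
          (∏ i, ((u i : ℝ≥0∞) ^ 2)⁻¹) * ENNReal.ofReal (2 / M * ∏ i, (u i : ℝ)) else 0 :=
        ENNReal.tsum_le_tsum fun b => ENNReal.tsum_le_tsum fun u =>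
          tsum_shiftedTerm_le_mul hM₀ b u
    _ ≤ ENNReal.ofReal 2 * (ENNReal.ofReal (2 / M) * ENNReal.ofReal (1 + Real.log M) ^ k) := by
        simp_rw [ENNReal.tsum_mul_left, ENNReal.tsum_mul_right]
        exact mul_le_mul' hb (tsum_prod_inv_sq_mul_ofReal_le hM (by positivity))
    _ = _ := by
        have : 0 ≤ 1 + Real.log M := by linarith [Real.log_nonneg hM]
        rw [← ENNReal.ofReal_pow this, ← ENNReal.ofReal_mul (by positivity),
          ← ENNReal.ofReal_mul (by positivity)]
        congr 1
        ring

lemma ofReal_mul_prod_inv_le_tsum_shiftedTerm {k : ℕ} {M : ℝ} {u : Fin k → ℕ}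
    (hu : ∀ i, 0 < u i) (hQM : ∏ i, (u i : ℝ) < M) :
    ENNReal.ofReal (1 / (8 * M)) * ∏ i, (u i : ℝ≥0∞)⁻¹ ≤ ∑' c, shiftedTerm k M 1 u c := by
  have hQ : 0 < ∏ i, (u i : ℝ) := prod_pos fun i _ => Nat.cast_pos.mpr (hu i)
  have hM : 0 < M := hQ.trans hQM
  rw [tsum_shiftedTerm_eq hM one_pos hu, Nat.cast_one, one_mul, if_pos hQM, Nat.cast_one,
    one_pow, inv_one, one_mul, ← prod_inv_sq_mul_ofReal_prod hu (by positivity)]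
  gcongr
  refine le_trans (le_of_eq ?_) (le_invSqTail ((one_le_div hQ).mpr hQM.le))
  field_simp

lemma exists_nat_pow_lt_and_log_div_le (k : ℕ) {M : ℝ} (hM : 1 < M) :
    ∃ N : ℕ, (N : ℝ) ^ k < M ∧ Real.log M / (k + 1) ≤ Real.log (N + 1) := by
  set x := M ^ ((k + 1 : ℝ)⁻¹)
  have hx : 1 < x := Real.one_lt_rpow hM (by positivity)
  have hxk : x ^ (k + 1) = M := by
    rw [← Real.rpow_natCast, ← Real.rpow_mul (by linarith)]
    push_cast
    rw [inv_mul_cancel₀ (by positivity), Real.rpow_one]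
  refine ⟨⌊x⌋₊, ?_, ?_⟩
  · calc (⌊x⌋₊ : ℝ) ^ k ≤ x ^ k := by gcongr; exact Nat.floor_le (by linarith)
      _ < x ^ (k + 1) := pow_lt_pow_right₀ hx k.lt_succ_self
      _ = M := hxk
  · rw [div_le_iff₀ (by positivity), mul_comm, ← Nat.cast_succ, ← Real.log_pow, ← hxk]
    exact Real.log_le_log (by positivity) (by gcongr; exact (Nat.lt_floor_add_one x).le)

lemma le_tsum_shiftedTerm (k : ℕ) {M : ℝ} (hM : 1 < M) :
    ENNReal.ofReal ((Real.log M / (k + 1)) ^ k / (8 * M))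
      ≤ ∑' (b) (u) (c), shiftedTerm k M b u c := by
  obtain ⟨N, hNM, hlogN⟩ := exists_nat_pow_lt_and_log_div_le k hM
  have hbox : ∀ u ∈ Fintype.piFinset fun _ : Fin k => Icc 1 N, ∏ i, (u i : ℝ) < M := by
    refine fun u hu => lt_of_le_of_lt ?_ hNM
    have : ∏ i, u i ≤ N ^ k := by
      simpa using prod_le_pow_card univ u N fun i _ =>
        (Finset.mem_Icc.mp (Fintype.mem_piFinset.mp hu i)).2
    exact_mod_cast this
  have hlog : 0 ≤ Real.log M / (k + 1) := div_nonneg (Real.log_nonneg hM.le) (by positivity)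
  calc ENNReal.ofReal ((Real.log M / (k + 1)) ^ k / (8 * M))
      = ENNReal.ofReal (1 / (8 * M)) * ENNReal.ofReal (Real.log M / (k + 1)) ^ k := by
        rw [← ENNReal.ofReal_pow hlog, ← ENNReal.ofReal_mul (by positivity)]
        congr 1
        ring
    _ ≤ ENNReal.ofReal (1 / (8 * M)) * ENNReal.ofReal (harmonic N) ^ k := by
        gcongr
        exact hlogN.trans (by exact_mod_cast log_add_one_le_harmonic N)
    _ = ∑ u ∈ Fintype.piFinset fun _ => Icc 1 N,
          ENNReal.ofReal (1 / (8 * M)) * ∏ i, (u i : ℝ≥0∞)⁻¹ := by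
        rw [← mul_sum, ← sum_Icc_inv_eq_ofReal_harmonic, sum_pow']
    _ ≤ ∑ u ∈ Fintype.piFinset fun _ => Icc 1 N, ∑' c, shiftedTerm k M 1 u c :=
        sum_le_sum fun u hu => ofReal_mul_prod_inv_le_tsum_shiftedTerm
          (fun i => (Finset.mem_Icc.mp (Fintype.mem_piFinset.mp hu i)).1) (hbox u hu)
    _ ≤ ∑' (u) (c), shiftedTerm k M 1 u c := ENNReal.sum_le_tsum _
    _ ≤ _ := ENNReal.le_tsum (f := fun b => ∑' (u) (c), shiftedTerm k M b u c) 1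

lemma shiftedSum_succ_le (k : ℕ) {M : ℝ} (hM : 1 ≤ M) :
    shiftedSum (k + 1) M ≤ 4 * (1 + Real.log M) ^ k / M := by
  rw [shiftedSum_eq_toReal_tsum_shiftedTerm]
  exact ENNReal.toReal_le_of_le_ofReal (by have := Real.log_nonneg hM; positivity)
    (tsum_shiftedTerm_le k hM)

lemma le_shiftedSum_succ (k : ℕ) {M : ℝ} (hM : 1 < M) :
    (Real.log M / (k + 1)) ^ k / (8 * M) ≤ shiftedSum (k + 1) M := by
  rw [shiftedSum_eq_toReal_tsum_shiftedTerm]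
  exact (ENNReal.ofReal_le_iff_le_toReal (ne_top_of_le_ne_top ENNReal.ofReal_ne_top
    (tsum_shiftedTerm_le k hM.le))).mp (le_tsum_shiftedTerm k hM)

theorem stmt_11 (ℓ : ℕ) (hℓ : 1 ≤ ℓ) :
    ∃ c₁ c₂ M₀ : ℝ, 0 < c₁ ∧ 0 < c₂ ∧ 1 < M₀ ∧
      ∀ M : ℝ, M₀ ≤ M →
        c₁ * (Real.log M) ^ (ℓ - 1) / M ≤ shiftedSum ℓ M ∧
        shiftedSum ℓ M ≤ c₂ * (Real.log M) ^ (ℓ - 1) / M := by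
  obtain ⟨k, rfl⟩ := Nat.exists_eq_add_of_le' hℓ
  refine ⟨1 / (8 * (k + 1) ^ k), 4 * 2 ^ k, Real.exp 1, by positivity, by positivity,
    Real.one_lt_exp_iff.mpr one_pos, fun M hM => ?_⟩
  have hM₁ : 1 < M := (Real.one_lt_exp_iff.mpr one_pos).trans_le hM
  have hlog : 1 ≤ Real.log M := (Real.le_log_iff_exp_le (by linarith)).mpr hM
  rw [Nat.add_sub_cancel]
  constructor
  · calc 1 / (8 * (k + 1) ^ k) * Real.log M ^ k / M = (Real.log M / (k + 1)) ^ k / (8 * M) := by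
          rw [div_pow]
          field_simp
      _ ≤ shiftedSum (k + 1) M := le_shiftedSum_succ k hM₁
  · calc shiftedSum (k + 1) M ≤ 4 * (1 + Real.log M) ^ k / M := shiftedSum_succ_le k hM₁.le
      _ ≤ 4 * 2 ^ k * Real.log M ^ k / M := by
          rw [mul_assoc, ← mul_pow]
          gcongr
          linarith
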